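/- arXiv:math/0501240 — 4 statements merged into one kernel-verified Lean document; each statement's English description precedes it below -/
import Mathlib

section
/- Let 0 < q < 1 and let A be a unital *-algebra over ℂ containing elements α, β satisfying the SU_q(2) relations. Then the 2×2 matrix p over A with rows (α*α, qα*β) and (qβ*α, q²β*β) is a self-adjoint idempotent: p² = p and p* = p (where * on matrices is the conjugate-transpose using the *-operation of A). Moreover its entries can be rewritten as p = ((1 − a, −qb), (−qb*, q²a)) where a := ββ* and b := −α*β. -/
/-! The matrix `p` factors as `uᴴ * u` for the row `u = (α, qβ)`, and the relation
`αα* + q²ββ* = 1` says exactly that `u * uᴴ = 1`; hence `p² = uᴴ (u uᴴ) u = p`, while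
`p = uᴴ u` is Hermitian by construction. The rewritten entries come from
`α*α = 1 - β*β` and the normality `ββ* = β*β`. -/

open Matrix

theorem Matrix.isIdempotentElem_conjTranspose_mul_self {m n R : Type*} [Fintype m] [Fintype n]
    [DecidableEq m] [Semiring R] [StarRing R] (u : Matrix m n R) (hu : u * uᴴ = 1) :
    IsIdempotentElem (uᴴ * u) := by
  rw [IsIdempotentElem, Matrix.mul_assoc, ← Matrix.mul_assoc u, hu, Matrix.one_mul]

section SUq2

variable {A : Type*} [Ring A] [StarRing A] [Algebra ℂ A] [StarModule ℂ A]

theorem row_conjTranspose_mul_self (q : ℝ) (α β : A) :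
    (!![α, (q : ℂ) • β] : Matrix (Fin 1) (Fin 2) A)ᴴ * !![α, (q : ℂ) • β] =
      !![star α * α, (q : ℂ) • (star α * β); (q : ℂ) • (star β * α),
        (q : ℂ) ^ 2 • (star β * β)] := by
  ext i j
  fin_cases i <;> fin_cases j <;>
    simp [Matrix.mul_apply, smul_smul, ← sq, ← Complex.ofReal_pow, Complex.coe_smul]

theorem row_mul_conjTranspose_self (q : ℝ) (α β : A) :
    (!![α, (q : ℂ) • β] : Matrix (Fin 1) (Fin 2) A) * !![α, (q : ℂ) • β]ᴴ =
      !![α * star α + (q : ℂ) ^ 2 • (β * star β)] := by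
  ext i j
  fin_cases i; fin_cases j
  simp [Matrix.mul_apply, smul_smul, ← sq, ← Complex.ofReal_pow, Complex.coe_smul]

end SUq2

theorem suq2_projector_two_general (q : ℝ)
    (A : Type*) [Ring A] [StarRing A] [Algebra ℂ A] [StarModule ℂ A]
    (α β : A)
    (h3 : β * star β = star β * β)
    (h4 : star α * α + star β * β = 1)
    (h5 : α * star α + (q : ℂ) ^ 2 • (β * star β) = 1) :
    (!![star α * α, (q : ℂ) • (star α * β); (q : ℂ) • (star β * α),
          (q : ℂ) ^ 2 • (star β * β)] : Matrix (Fin 2) (Fin 2) A) *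
        !![star α * α, (q : ℂ) • (star α * β); (q : ℂ) • (star β * α),
          (q : ℂ) ^ 2 • (star β * β)] =
      !![star α * α, (q : ℂ) • (star α * β); (q : ℂ) • (star β * α),
          (q : ℂ) ^ 2 • (star β * β)] ∧
    (!![star α * α, (q : ℂ) • (star α * β); (q : ℂ) • (star β * α),
          (q : ℂ) ^ 2 • (star β * β)] : Matrix (Fin 2) (Fin 2) A)ᴴ =
      !![star α * α, (q : ℂ) • (star α * β); (q : ℂ) • (star β * α),
          (q : ℂ) ^ 2 • (star β * β)] ∧
    (!![star α * α, (q : ℂ) • (star α * β); (q : ℂ) • (star β * α),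
          (q : ℂ) ^ 2 • (star β * β)] : Matrix (Fin 2) (Fin 2) A) =
      !![1 - β * star β, -((q : ℂ) • (-(star α * β)));
         -((q : ℂ) • star (-(star α * β))), (q : ℂ) ^ 2 • (β * star β)] := by
  set u : Matrix (Fin 1) (Fin 2) A := !![α, (q : ℂ) • β]
  have hu : u * uᴴ = 1 := by
    rw [row_mul_conjTranspose_self, h5]
    exact Matrix.ext fun i j => by fin_cases i; fin_cases j; rfl
  have hαα : star α * α = 1 - β * star β := by rw [h3, ← h4, add_sub_cancel_right]
  refine ⟨?_, ?_, ?_⟩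
  · rw [← row_conjTranspose_mul_self]
    exact (u.isIdempotentElem_conjTranspose_mul_self hu).eq
  · rw [← row_conjTranspose_mul_self]
    exact isHermitian_conjTranspose_mul_self u
  · rw [hαα, h3]
    simp

open Matrix in
/-- In a unital `*`-algebra over `ℂ` with `α, β` satisfying the `SU_q(2)` relations, the
matrix `p = ((α*α, qα*β), (qβ*α, q²β*β))` is a self-adjoint idempotent, and its entries can
be rewritten as `((1 − a, −qb), (−qb*, q²a))` with `a := ββ*`, `b := −α*β`. -/
theorem suq2_projector_two (q : ℝ) (hq0 : 0 < q) (hq1 : q < 1)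
    (A : Type*) [Ring A] [StarRing A] [Algebra ℂ A] [StarModule ℂ A]
    (α β : A)
    (h1 : α * β = (q : ℂ) • (β * α))
    (h2 : α * star β = (q : ℂ) • (star β * α))
    (h3 : β * star β = star β * β)
    (h4 : star α * α + star β * β = 1)
    (h5 : α * star α + (q : ℂ) ^ 2 • (β * star β) = 1) :
    (!![star α * α, (q : ℂ) • (star α * β); (q : ℂ) • (star β * α),
          (q : ℂ) ^ 2 • (star β * β)] : Matrix (Fin 2) (Fin 2) A) *
        !![star α * α, (q : ℂ) • (star α * β); (q : ℂ) • (star β * α),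
          (q : ℂ) ^ 2 • (star β * β)] =
      !![star α * α, (q : ℂ) • (star α * β); (q : ℂ) • (star β * α),
          (q : ℂ) ^ 2 • (star β * β)] ∧
    (!![star α * α, (q : ℂ) • (star α * β); (q : ℂ) • (star β * α),
          (q : ℂ) ^ 2 • (star β * β)] : Matrix (Fin 2) (Fin 2) A)ᴴ =
      !![star α * α, (q : ℂ) • (star α * β); (q : ℂ) • (star β * α),
          (q : ℂ) ^ 2 • (star β * β)] ∧
    (!![star α * α, (q : ℂ) • (star α * β); (q : ℂ) • (star β * α),
          (q : ℂ) ^ 2 • (star β * β)] : Matrix (Fin 2) (Fin 2) A) =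
      !![1 - β * star β, -((q : ℂ) • (-(star α * β)));
         -((q : ℂ) • star (-(star α * β))), (q : ℂ) ^ 2 • (β * star β)] :=
  suq2_projector_two_general q A α β h3 h4 h5
end

section
/- Fix 0 < q < 1. On the Hilbert space ℓ²(ℕ × ℤ) with orthonormal basis ε_{i,j} (i ∈ ℕ, j ∈ ℤ), the operators defined on basis vectors by α ε_{i,j} = (1 − q^{2i})^{1/2} ε_{i−1,j} (zero when i = 0) and β ε_{i,j} = q^{i} ε_{i,j−1} extend to bounded operators of norm at most 1, their Hilbert-space adjoints satisfy α* ε_{i,j} = (1 − q^{2i+2})^{1/2} ε_{i+1,j} and β* ε_{i,j} = q^{i} ε_{i,j+1}, and α, β satisfy all the SU_q(2) relations: αβ = qβα, αβ* = qβ*α, ββ* = β*β, α*α + β*β = 1, αα* + q²ββ* = 1. -/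
noncomputable section

/-- The Hilbert space `ℓ²(ℕ × ℤ)`. -/
abbrev HNZ : Type := lp (fun _ : ℕ × ℤ => ℂ) 2

/-- The standard orthonormal basis vector `ε_{i,j}` of `ℓ²(ℕ × ℤ)`. -/
noncomputable def eNZ (i : ℕ) (j : ℤ) : HNZ := lp.single 2 (i, j) 1

namespace SUq2Aux

open scoped ComplexConjugate ENNReal

abbrev I2 : Type := ℕ × ℤ
abbrev H2 : Type := lp (fun _ : I2 => ℂ) 2

lemma two_pos' : (0:ℝ) < (2 : ℝ≥0∞).toReal := by norm_num

lemma norm_sq_summable (x : H2) :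
    Summable (fun k : I2 => ‖x k‖ ^ (2 : ℝ≥0∞).toReal) :=
  (memℓp_gen_iff two_pos').1 (lp.memℓp x)

variable (g : I2 → I2) (w : I2 → ℂ)

lemma opAux (hw : ∀ k, ‖w k‖ ≤ 1) (hg : Set.InjOn g {k | w k ≠ 0}) (x : H2) :
    Summable (fun k : I2 => ‖w k * x (g k)‖ ^ (2 : ℝ≥0∞).toReal) ∧
      ∑' k : I2, ‖w k * x (g k)‖ ^ (2 : ℝ≥0∞).toReal
        ≤ ∑' k : I2, ‖x k‖ ^ (2 : ℝ≥0∞).toReal := by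
  set p : ℝ := (2 : ℝ≥0∞).toReal with hp
  set s : Set I2 := {k | w k ≠ 0} with hs
  set F : I2 → ℝ := fun k => ‖w k * x (g k)‖ ^ p with hF
  have hxs : Summable (fun k : I2 => ‖x k‖ ^ p) := norm_sq_summable x
  have hGinj : Function.Injective (fun k : s => g (k : I2)) := by
    intro a b hab
    exact Subtype.ext (hg a.2 b.2 hab)
  have h1 : Summable (fun k : s => ‖x (g (k : I2))‖ ^ p) := hxs.comp_injective hGinj
  have hle : ∀ k : I2, F k ≤ ‖x (g k)‖ ^ p := by
    intro k
    apply Real.rpow_le_rpow (norm_nonneg _) _ (le_of_lt two_pos')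
    calc ‖w k * x (g k)‖ = ‖w k‖ * ‖x (g k)‖ := norm_mul _ _
      _ ≤ 1 * ‖x (g k)‖ := by
          exact mul_le_mul_of_nonneg_right (hw k) (norm_nonneg _)
      _ = ‖x (g k)‖ := one_mul _
  have hFnonneg : ∀ k, 0 ≤ F k := fun k => Real.rpow_nonneg (norm_nonneg _) _
  have h2 : Summable (fun k : s => F (k : I2)) :=
    Summable.of_nonneg_of_le (fun k => hFnonneg k) (fun k => hle k) h1
  have hsupp : Function.support F ⊆ s := by
    intro k hk
    simp only [Function.mem_support, hF] at hk
    by_contra hk'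
    simp only [hs, Set.mem_setOf_eq, not_not] at hk'
    exact hk (by simp [hk']; exact Real.zero_rpow (ne_of_gt two_pos'))
  refine ⟨?_, ?_⟩
  · rw [← Set.indicator_eq_self.mpr hsupp]
    exact summable_subtype_iff_indicator.mp h2
  · rw [← tsum_subtype_eq_of_support_subset hsupp]
    exact h2.tsum_le_tsum_of_inj (fun k : s => g (k : I2)) hGinj
      (fun c _ => Real.rpow_nonneg (norm_nonneg _) _) (fun k => hle k) hxs

/-- The weighted composition (shift) operator, as a linear map. -/
def opL (hw : ∀ k, ‖w k‖ ≤ 1) (hg : Set.InjOn g {k | w k ≠ 0}) : H2 →ₗ[ℂ] H2 where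
  toFun x := ⟨fun k => w k * x (g k), memℓp_gen (opAux g w hw hg x).1⟩
  map_add' x y := by
    ext k
    simp [lp.coeFn_add, Pi.add_apply, mul_add]
    rfl
  map_smul' c x := by
    ext k
    simp [lp.coeFn_smul, Pi.smul_apply, smul_eq_mul]
    ring

lemma opL_apply (hw : ∀ k, ‖w k‖ ≤ 1) (hg : Set.InjOn g {k | w k ≠ 0}) (x : H2) (k : I2) :
    (opL g w hw hg x : ∀ _ : I2, ℂ) k = w k * x (g k) := rfl

lemma opL_norm (hw : ∀ k, ‖w k‖ ≤ 1) (hg : Set.InjOn g {k | w k ≠ 0}) (x : H2) :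
    ‖opL g w hw hg x‖ ≤ ‖x‖ := by
  refine (Real.rpow_le_rpow_iff (norm_nonneg _) (norm_nonneg _) two_pos').1 ?_
  calc ‖opL g w hw hg x‖ ^ (2 : ℝ≥0∞).toReal
      = ∑' k : I2, ‖(opL g w hw hg x : ∀ _ : I2, ℂ) k‖ ^ (2 : ℝ≥0∞).toReal :=
        lp.norm_rpow_eq_tsum two_pos' _
    _ = ∑' k : I2, ‖w k * x (g k)‖ ^ (2 : ℝ≥0∞).toReal := rfl
    _ ≤ ∑' k : I2, ‖x k‖ ^ (2 : ℝ≥0∞).toReal := (opAux g w hw hg x).2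
    _ = ‖x‖ ^ (2 : ℝ≥0∞).toReal := (lp.norm_rpow_eq_tsum two_pos' _).symm

/-- The weighted composition (shift) operator, as a continuous linear map. -/
def Op (hw : ∀ k, ‖w k‖ ≤ 1) (hg : Set.InjOn g {k | w k ≠ 0}) : H2 →L[ℂ] H2 :=
  (opL g w hw hg).mkContinuous 1 (fun x => by simpa using opL_norm g w hw hg x)

lemma Op_apply (hw : ∀ k, ‖w k‖ ≤ 1) (hg : Set.InjOn g {k | w k ≠ 0}) (x : H2) (k : I2) :
    (Op g w hw hg x : ∀ _ : I2, ℂ) k = w k * x (g k) := rfl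

lemma Op_norm_le (hw : ∀ k, ‖w k‖ ≤ 1) (hg : Set.InjOn g {k | w k ≠ 0}) :
    ‖Op g w hw hg‖ ≤ 1 :=
  LinearMap.mkContinuous_norm_le _ zero_le_one _

lemma Op_single (hw : ∀ k, ‖w k‖ ≤ 1) (hg : Set.InjOn g {k | w k ≠ 0}) (m k₀ : I2)
    (hk₀ : g k₀ = m) (huniq : ∀ k, g k = m → w k ≠ 0 → k = k₀) :
    Op g w hw hg (lp.single 2 m 1) = w k₀ • lp.single 2 k₀ 1 := by
  apply lp.ext
  funext k
  rw [lp.coeFn_smul, Pi.smul_apply, Op_apply, smul_eq_mul]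
  rcases eq_or_ne k k₀ with rfl | hk
  · rw [hk₀, lp.single_apply_self, lp.single_apply_self]
  · rw [lp.single_apply_ne 2 k₀ _ hk, mul_zero]
    by_cases hgk : g k = m
    · by_cases hwk : w k = 0
      · rw [hwk, zero_mul]
      · exact absurd (huniq k hgk hwk) hk
    · rw [lp.single_apply_ne 2 m _ hgk, mul_zero]

lemma Op_single_zero (hw : ∀ k, ‖w k‖ ≤ 1) (hg : Set.InjOn g {k | w k ≠ 0}) (m : I2)
    (h : ∀ k, g k ≠ m) :
    Op g w hw hg (lp.single 2 m 1) = 0 := by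
  apply lp.ext
  funext k
  rw [Op_apply, lp.single_apply_ne 2 m _ (h k), mul_zero]
  rfl

lemma Op_adjoint (g' : I2 → I2) (w' : I2 → ℂ)
    (hw : ∀ k, ‖w k‖ ≤ 1) (hg : Set.InjOn g {k | w k ≠ 0})
    (hw' : ∀ k, ‖w' k‖ ≤ 1) (hg' : Set.InjOn g' {k | w' k ≠ 0})
    (hginj : Function.Injective g)
    (h1 : ∀ k, w' (g k) = conj (w k))
    (h2 : ∀ k, w k ≠ 0 → g' (g k) = k)
    (h3 : ∀ m, m ∉ Set.range g → w' m = 0) :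
    ContinuousLinearMap.adjoint (Op g w hw hg) = Op g' w' hw' hg' := by
  symm
  rw [ContinuousLinearMap.eq_adjoint_iff]
  intro x y
  rw [lp.inner_eq_tsum, lp.inner_eq_tsum]
  simp only [RCLike.inner_apply, Op_apply]
  set f : I2 → ℂ := fun m => conj (w' m * x (g' m)) * y m with hf
  have hsupp : Function.support f ⊆ Set.range g := by
    intro m hm
    by_contra hm'
    apply hm
    simp [hf, h3 m hm']
  have key : ∀ k : I2, f (g k) = conj (x k) * (w k * y (g k)) := by
    intro k
    by_cases hwk : w k = 0
    · simp [hf, h1 k, hwk]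
    · simp only [hf, h2 k hwk, h1 k, map_mul, RingHomCompTriple.comp_apply,
        RingHom.id_apply]
      ring
  calc ∑' m : I2, y m * conj (w' m * x (g' m)) = ∑' m : I2, f m := tsum_congr fun m => mul_comm _ _
    _ = ∑' k : I2, f (g k) := (hginj.tsum_eq hsupp).symm
    _ = ∑' k : I2, w k * y (g k) * conj (x k) := tsum_congr fun k => (key k).trans (mul_comm _ _)

variable (q : ℝ)

def cf (i : ℕ) : ℝ := Real.sqrt (1 - q ^ (2 * i))

def wA : I2 → ℂ := fun k => ((cf q (k.1 + 1) : ℝ) : ℂ)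
def gA : I2 → I2 := fun k => (k.1 + 1, k.2)
def wA' : I2 → ℂ := fun k => ((cf q k.1 : ℝ) : ℂ)
def gA' : I2 → I2 := fun k => (k.1 - 1, k.2)
def wB : I2 → ℂ := fun k => ((q ^ k.1 : ℝ) : ℂ)
def gB : I2 → I2 := fun k => (k.1, k.2 + 1)
def gB' : I2 → I2 := fun k => (k.1, k.2 - 1)

variable {q}

lemma hq_sub (hq0 : 0 < q) (hq1 : q < 1) (n : ℕ) : 0 ≤ 1 - q ^ n :=
  sub_nonneg.2 (pow_le_one₀ hq0.le hq1.le)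

lemma cf_nonneg (i : ℕ) : 0 ≤ cf q i := Real.sqrt_nonneg _

lemma cf_le_one (hq0 : 0 < q) (i : ℕ) : cf q i ≤ 1 := by
  rw [cf]
  calc Real.sqrt (1 - q ^ (2 * i)) ≤ Real.sqrt 1 :=
        Real.sqrt_le_sqrt (by nlinarith [pow_nonneg hq0.le (2 * i)])
    _ = 1 := Real.sqrt_one

lemma cf_zero : cf q 0 = 0 := by simp [cf]

lemma cf_sq (hq0 : 0 < q) (hq1 : q < 1) (i : ℕ) :
    cf q i * cf q i = 1 - q ^ (2 * i) :=
  Real.mul_self_sqrt (hq_sub hq0 hq1 _)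

lemma cf_sq_c (hq0 : 0 < q) (hq1 : q < 1) (i : ℕ) :
    ((cf q i : ℝ) : ℂ) * ((cf q i : ℝ) : ℂ) = 1 - (q : ℂ) ^ (2 * i) := by
  rw [← Complex.ofReal_mul, cf_sq hq0 hq1 i]
  push_cast
  ring

lemma hwA (hq0 : 0 < q) (hq1 : q < 1) : ∀ k, ‖wA q k‖ ≤ 1 := by
  intro k
  simp only [wA, Complex.norm_real, Real.norm_eq_abs, abs_of_nonneg (cf_nonneg _)]
  exact cf_le_one hq0 _

lemma hwA' (hq0 : 0 < q) (hq1 : q < 1) : ∀ k, ‖wA' q k‖ ≤ 1 := by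
  intro k
  simp only [wA', Complex.norm_real, Real.norm_eq_abs, abs_of_nonneg (cf_nonneg _)]
  exact cf_le_one hq0 _

lemma hwB (hq0 : 0 < q) (hq1 : q < 1) : ∀ k, ‖wB q k‖ ≤ 1 := by
  intro k
  simp only [wB, Complex.norm_real, Real.norm_eq_abs,
    abs_of_nonneg (pow_nonneg hq0.le _)]
  exact pow_le_one₀ hq0.le hq1.le

lemma gA_inj : Function.Injective gA := by
  intro a b h
  simp only [gA, Prod.ext_iff] at h ⊢
  omega

lemma gB_inj : Function.Injective gB := by
  intro a b h
  simp only [gB, Prod.ext_iff] at h ⊢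
  omega

lemma gB'_inj : Function.Injective gB' := by
  intro a b h
  simp only [gB', Prod.ext_iff] at h ⊢
  omega

lemma wA'_ne_zero {k : I2} (h : wA' q k ≠ 0) : k.1 ≠ 0 := by
  intro h0
  exact h (by simp [wA', h0, cf_zero])

lemma gA'_injOn : Set.InjOn gA' {k | wA' q k ≠ 0} := by
  intro a ha b hb h
  have ha' := wA'_ne_zero ha
  have hb' := wA'_ne_zero hb
  simp only [gA', Prod.ext_iff] at h ⊢
  omega

variable (hq0 : 0 < q) (hq1 : q < 1)

def Aop : H2 →L[ℂ] H2 := Op gA (wA q) (hwA hq0 hq1) gA_inj.injOn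
def A'op : H2 →L[ℂ] H2 := Op gA' (wA' q) (hwA' hq0 hq1) gA'_injOn
def Bop : H2 →L[ℂ] H2 := Op gB (wB q) (hwB hq0 hq1) gB_inj.injOn
def B'op : H2 →L[ℂ] H2 := Op gB' (wB q) (hwB hq0 hq1) gB'_inj.injOn

lemma adjoint_A : ContinuousLinearMap.adjoint (Aop hq0 hq1) = A'op hq0 hq1 := by
  apply Op_adjoint
  · exact gA_inj
  · intro k
    simp [wA, wA', gA, Complex.conj_ofReal]
  · intro k _
    simp [gA, gA']
  · intro m hm
    have : m.1 = 0 := by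
      by_contra h
      exact hm ⟨(m.1 - 1, m.2), by simp only [gA]; ext <;> simp <;> omega⟩
    simp [wA', this, cf_zero]

lemma adjoint_B : ContinuousLinearMap.adjoint (Bop hq0 hq1) = B'op hq0 hq1 := by
  apply Op_adjoint
  · exact gB_inj
  · intro k
    simp [wB, gB, Complex.conj_ofReal]
  · intro k _
    simp [gB, gB']
  · intro m hm
    exact absurd ⟨(m.1, m.2 - 1), by simp [gB]⟩ hm


lemma relAB : Aop hq0 hq1 * Bop hq0 hq1 = (q : ℂ) • (Bop hq0 hq1 * Aop hq0 hq1) := by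
  refine ContinuousLinearMap.ext fun x => ?_
  apply lp.ext
  funext k
  obtain ⟨i, j⟩ := k
  simp only [ContinuousLinearMap.mul_apply, ContinuousLinearMap.smul_apply,
    lp.coeFn_smul, Pi.smul_apply, Aop, Bop, Op_apply, smul_eq_mul, wA, wB, gA, gB]
  push_cast
  ring

lemma relAB' : Aop hq0 hq1 * B'op hq0 hq1 = (q : ℂ) • (B'op hq0 hq1 * Aop hq0 hq1) := by
  refine ContinuousLinearMap.ext fun x => ?_
  apply lp.ext
  funext k
  obtain ⟨i, j⟩ := k
  simp only [ContinuousLinearMap.mul_apply, ContinuousLinearMap.smul_apply,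
    lp.coeFn_smul, Pi.smul_apply, Aop, B'op, Op_apply, smul_eq_mul, wA, wB, gA, gB']
  push_cast
  ring

lemma relBB' : Bop hq0 hq1 * B'op hq0 hq1 = B'op hq0 hq1 * Bop hq0 hq1 := by
  refine ContinuousLinearMap.ext fun x => ?_
  apply lp.ext
  funext k
  obtain ⟨i, j⟩ := k
  simp only [ContinuousLinearMap.mul_apply, Bop, B'op, Op_apply, wB, gB, gB']
  norm_num

lemma relA'A : A'op hq0 hq1 * Aop hq0 hq1 + B'op hq0 hq1 * Bop hq0 hq1 = 1 := by
  refine ContinuousLinearMap.ext fun x => ?_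
  apply lp.ext
  funext k
  obtain ⟨i, j⟩ := k
  simp only [ContinuousLinearMap.add_apply, ContinuousLinearMap.mul_apply,
    ContinuousLinearMap.one_apply, lp.coeFn_add, Pi.add_apply,
    Aop, A'op, Bop, B'op, Op_apply, wA, wA', wB, gA, gA', gB, gB']
  cases i with
  | zero =>
      simp [cf_zero]
  | succ i =>
      simp only [Nat.add_sub_cancel, Int.sub_add_cancel, add_sub_cancel_right]
      have hs := cf_sq_c hq0 hq1 (i + 1)
      push_cast at hs ⊢
      linear_combination (x (i + 1, j)) * hs

lemma relAA' : Aop hq0 hq1 * A'op hq0 hq1 + (q : ℂ) ^ 2 • (Bop hq0 hq1 * B'op hq0 hq1) = 1 := by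
  refine ContinuousLinearMap.ext fun x => ?_
  apply lp.ext
  funext k
  obtain ⟨i, j⟩ := k
  simp only [ContinuousLinearMap.add_apply, ContinuousLinearMap.mul_apply,
    ContinuousLinearMap.smul_apply, ContinuousLinearMap.one_apply,
    lp.coeFn_add, lp.coeFn_smul, Pi.add_apply, Pi.smul_apply, smul_eq_mul,
    Aop, A'op, Bop, B'op, Op_apply, wA, wA', wB, gA, gA', gB, gB']
  simp only [Nat.add_sub_cancel, Int.sub_add_cancel, add_sub_cancel_right]
  have hs := cf_sq_c hq0 hq1 (i + 1)
  push_cast at hs ⊢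
  linear_combination (x (i, j)) * hs

end SUq2Aux

open SUq2Aux

/-- The left regular type representation of `SU_q(2)` on `ℓ²(ℕ × ℤ)` from [CP2]:
`α ε_{i,j} = (1−q^{2i})^{1/2} ε_{i−1,j}` (zero for `i = 0`), `β ε_{i,j} = q^i ε_{i,j−1}`
extend to bounded operators of norm at most one, whose adjoints act by
`α* ε_{i,j} = (1−q^{2i+2})^{1/2} ε_{i+1,j}`, `β* ε_{i,j} = q^i ε_{i,j+1}`, and which
satisfy all the `SU_q(2)` relations. -/
theorem suq2_rep_on_l2_nat_int (q : ℝ) (hq0 : 0 < q) (hq1 : q < 1) :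
    ∃ α β : HNZ →L[ℂ] HNZ,
      (∀ j : ℤ, α (eNZ 0 j) = 0) ∧
      (∀ (i : ℕ) (j : ℤ),
        α (eNZ (i + 1) j) = ((Real.sqrt (1 - q ^ (2 * (i + 1))) : ℝ) : ℂ) • eNZ i j) ∧
      (∀ (i : ℕ) (j : ℤ), β (eNZ i j) = ((q ^ i : ℝ) : ℂ) • eNZ i (j - 1)) ∧
      ‖α‖ ≤ 1 ∧ ‖β‖ ≤ 1 ∧
      (∀ (i : ℕ) (j : ℤ), ContinuousLinearMap.adjoint α (eNZ i j)
          = ((Real.sqrt (1 - q ^ (2 * i + 2)) : ℝ) : ℂ) • eNZ (i + 1) j) ∧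
      (∀ (i : ℕ) (j : ℤ),
        ContinuousLinearMap.adjoint β (eNZ i j) = ((q ^ i : ℝ) : ℂ) • eNZ i (j + 1)) ∧
      α * β = (q : ℂ) • (β * α) ∧
      α * ContinuousLinearMap.adjoint β = (q : ℂ) • (ContinuousLinearMap.adjoint β * α) ∧
      β * ContinuousLinearMap.adjoint β = ContinuousLinearMap.adjoint β * β ∧
      ContinuousLinearMap.adjoint α * α + ContinuousLinearMap.adjoint β * β = 1 ∧
      α * ContinuousLinearMap.adjoint α + (q : ℂ) ^ 2 • (β * ContinuousLinearMap.adjoint β) = 1 := by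
  refine ⟨Aop hq0 hq1, Bop hq0 hq1, ?_, ?_, ?_, Op_norm_le _ _ _ _, Op_norm_le _ _ _ _,
    ?_, ?_, relAB hq0 hq1, ?_, ?_, ?_, ?_⟩
  · intro j
    exact Op_single_zero _ _ _ _ (0, j) (fun k => by simp [gA, Prod.ext_iff])
  · intro i j
    have := Op_single gA (wA q) (hwA hq0 hq1) gA_inj.injOn (i + 1, j) (i, j)
      (by simp [gA]) (fun k hk _ => by simpa [gA, Prod.ext_iff] using hk)
    simpa [eNZ, wA, cf, Aop] using this
  · intro i j
    have := Op_single gB (wB q) (hwB hq0 hq1) gB_inj.injOn (i, j) (i, j - 1)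
      (by simp [gB]) (fun k hk _ => by
        simp only [gB, Prod.ext_iff] at hk ⊢
        omega)
    simpa [eNZ, wB, Bop] using this
  · intro i j
    rw [show ContinuousLinearMap.adjoint (Aop hq0 hq1) = A'op hq0 hq1 from adjoint_A hq0 hq1]
    have := Op_single gA' (wA' q) (hwA' hq0 hq1) gA'_injOn (i, j) (i + 1, j)
      (by simp [gA']) (fun k hk hw => by
        have h1 := wA'_ne_zero hw
        simp only [gA', Prod.ext_iff] at hk ⊢
        omega)
    rw [show 2 * i + 2 = 2 * (i + 1) by ring]
    simpa [eNZ, wA', cf, A'op] using this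
  · intro i j
    rw [show ContinuousLinearMap.adjoint (Bop hq0 hq1) = B'op hq0 hq1 from adjoint_B hq0 hq1]
    have := Op_single gB' (wB q) (hwB hq0 hq1) gB'_inj.injOn (i, j) (i, j + 1)
      (by simp [gB']) (fun k hk _ => by
        simp only [gB', Prod.ext_iff] at hk ⊢
        omega)
    simpa [eNZ, wB, B'op] using this
  · rw [adjoint_B hq0 hq1]
    exact relAB' hq0 hq1
  · rw [adjoint_B hq0 hq1]
    exact relBB' hq0 hq1
  · rw [adjoint_A hq0 hq1, adjoint_B hq0 hq1]
    exact relA'A hq0 hq1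
  · rw [adjoint_A hq0 hq1, adjoint_B hq0 hq1]
    exact relAA' hq0 hq1


end
end

section
/- Fix 0 < q < 1. On ℓ²(ℕ × ℤ) with orthonormal basis ε_{i,j}, let α ε_{i,j} = (1 − q^{2i})^{1/2} ε_{i−1,j} (zero when i = 0), β ε_{i,j} = q^{i} ε_{i,j−1}, and let D be the (densely defined) self-adjoint operator D ε_{i,j} = (i·sign(j) + j) ε_{i,j}, where sign(j) := 1 for j ≥ 0 and sign(j) := −1 for j < 0. Then the commutators Dα − αD and Dβ − βD, defined on finitely supported vectors, extend to bounded operators; in fact ‖Dα − αD‖ ≤ 1 and ‖Dβ − βD‖ ≤ sup_{i∈ℕ}(2i + 1)q^{i} < ∞. -/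
/-!
`α` and `β` are weighted shifts `ε_{σ k} ↦ a_k ε_k` along injective maps `σ` of `ℕ × ℤ`
(`(i, j) ↦ (i + 1, j)` and `(i, j) ↦ (i, j + 1)`), and `D` is diagonal with eigenvalues `d`.
Hence `[D, A]` is again a weighted shift along `σ`, with weights `(d_k - d_{σ k}) a_k`, and a
weighted shift along an injective map is bounded on `ℓ²` by the supremum of its weights.
For `α` the eigenvalue jump `d_{i,j} - d_{i+1,j} = -sign j` has modulus one and the weights
`√(1 - q^{2i+2})` are at most one. For `β` the jump is `-1`, except across `j = -1 ↦ 0`,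
where it is `-(2i + 1)`; this gives the bound `sup_i (2i + 1) q^i`, finite as `(2i + 1) q^i → 0`.
-/

noncomputable section

/-- `sign j`: `1` for `j ≥ 0`, `-1` for `j < 0`. -/
def signZ (j : ℤ) : ℝ := if 0 ≤ j then 1 else -1

/-- The eigenvalue `i·sign(j) + j` of the Dirac operator `D` at the basis vector `ε_{i,j}`. -/
noncomputable def dNZ (i : ℕ) (j : ℤ) : ℝ := (i : ℝ) * signZ j + (j : ℝ)

open Function ENNReal

theorem LinearMap.commutator_apply_eq_smul_of_eigenvectors {R M : Type*} [CommRing R]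
    [AddCommGroup M] [Module R M] (D A : M →ₗ[R] M) {u v : M} {a du dv : R}
    (hA : A u = a • v) (hu : D u = du • u) (hv : D v = dv • v) :
    D (A u) - A (D u) = ((dv - du) * a) • v := by
  rw [hA, hu, map_smul, map_smul, hv, hA, smul_smul, smul_smul, ← sub_smul, sub_mul, mul_comm]

theorem norm_mul_rpow_le_of_norm_le {𝕜 : Type*} [NormedDivisionRing 𝕜] {c : 𝕜} {K r : ℝ}
    (hr : 0 ≤ r) (hc : ‖c‖ ≤ K) (a : 𝕜) : ‖c * a‖ ^ r ≤ K ^ r * ‖a‖ ^ r := by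
  rw [norm_mul, Real.mul_rpow (norm_nonneg _) (norm_nonneg _)]
  gcongr

namespace lp

variable {ι 𝕜 : Type*} [NontriviallyNormedField 𝕜] {p : ℝ≥0∞} {σ : ι → ι} {c : ι → 𝕜} {K : ℝ}

theorem summable_norm_rpow_weightedComp (hp : 0 < p.toReal) (hσ : Injective σ)
    (hK : ∀ k, ‖c k‖ ≤ K) (x : lp (fun _ : ι => 𝕜) p) :
    Summable fun k => ‖c k * x (σ k)‖ ^ p.toReal :=
  .of_nonneg_of_le (fun _ => by positivity) (fun k => norm_mul_rpow_le_of_norm_le hp.le (hK k) _)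
    ((((lp.memℓp x).summable hp).comp_injective hσ).mul_left _)

variable [Fact (1 ≤ p)]

theorem exists_weightedComp (hp : 0 < p.toReal) (hσ : Injective σ) (hK0 : 0 ≤ K)
    (hK : ∀ k, ‖c k‖ ≤ K) :
    ∃ T : lp (fun _ : ι => 𝕜) p →L[𝕜] lp (fun _ : ι => 𝕜) p,
      ‖T‖ ≤ K ∧ ∀ x k, T x k = c k * x (σ k) := by
  let L : lp (fun _ : ι => 𝕜) p →ₗ[𝕜] lp (fun _ : ι => 𝕜) p :=
    { toFun x := ⟨fun k => c k * x (σ k), memℓp_gen (summable_norm_rpow_weightedComp hp hσ hK x)⟩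
      map_add' x y := by ext k; exact mul_add _ _ _
      map_smul' a x := by ext k; exact mul_left_comm _ _ _ }
  have hL (x : lp (fun _ : ι => 𝕜) p) : ‖L x‖ ≤ K * ‖x‖ := by
    refine norm_le_of_tsum_le hp (by positivity) ?_
    have hx := (lp.memℓp x).summable hp
    calc ∑' k, ‖c k * x (σ k)‖ ^ p.toReal
        ≤ ∑' k, K ^ p.toReal * ‖x (σ k)‖ ^ p.toReal :=
          Summable.tsum_le_tsum (fun k => norm_mul_rpow_le_of_norm_le hp.le (hK k) _)
            (summable_norm_rpow_weightedComp hp hσ hK x) ((hx.comp_injective hσ).mul_left _)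
      _ ≤ K ^ p.toReal * ∑' k, ‖x k‖ ^ p.toReal := by
          rw [tsum_mul_left]
          exact mul_le_mul_of_nonneg_left
            (tsum_comp_le_tsum_of_inj hx (fun _ => by positivity) hσ) (by positivity)
      _ = (K * ‖x‖) ^ p.toReal := by
          rw [Real.mul_rpow hK0 (norm_nonneg _), norm_rpow_eq_tsum hp]
  exact ⟨L.mkContinuous K hL, LinearMap.mkContinuous_norm_le L hK0 hL, fun _ _ => rfl⟩

variable [DecidableEq ι]

theorem weightedComp_single {T : lp (fun _ : ι => 𝕜) p →L[𝕜] lp (fun _ : ι => 𝕜) p}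
    (hσ : Injective σ) (hT : ∀ x k, T x k = c k * x (σ k)) (k : ι) :
    T (lp.single p (σ k) 1) = c k • lp.single p k 1 := by
  ext m
  rw [hT, lp.coeFn_smul, Pi.smul_apply]
  by_cases hm : m = k
  · subst hm
    simp
  · rw [lp.single_apply_ne _ _ _ (hσ.ne hm), lp.single_apply_ne _ _ _ hm]
    simp

theorem weightedComp_single_of_notMem_range
    {T : lp (fun _ : ι => 𝕜) p →L[𝕜] lp (fun _ : ι => 𝕜) p}
    (hT : ∀ x k, T x k = c k * x (σ k)) {i : ι} (hi : i ∉ Set.range σ) :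
    T (lp.single p i 1) = 0 := by
  ext m
  rw [hT, lp.single_apply_ne _ _ _ fun h => hi ⟨m, h⟩]
  simp

theorem exists_commutator_diagonal_weightedShift (hp : 0 < p.toReal) (hσ : Injective σ)
    {a d : ι → 𝕜} (A D : lp (fun _ : ι => 𝕜) p →ₗ[𝕜] lp (fun _ : ι => 𝕜) p)
    (hA : ∀ k, A (lp.single p (σ k) 1) = a k • lp.single p k 1)
    (hA0 : ∀ i ∉ Set.range σ, A (lp.single p i 1) = 0)
    (hD : ∀ i, D (lp.single p i 1) = d i • lp.single p i 1)
    (hK0 : 0 ≤ K) (hK : ∀ k, ‖(d k - d (σ k)) * a k‖ ≤ K) :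
    ∃ C : lp (fun _ : ι => 𝕜) p →L[𝕜] lp (fun _ : ι => 𝕜) p, ‖C‖ ≤ K ∧
      ∀ i, C (lp.single p i 1) = D (A (lp.single p i 1)) - A (D (lp.single p i 1)) := by
  obtain ⟨C, hCK, hC⟩ := exists_weightedComp hp hσ hK0 hK
  refine ⟨C, hCK, fun i => ?_⟩
  by_cases hi : i ∈ Set.range σ
  · obtain ⟨k, rfl⟩ := hi
    rw [weightedComp_single hσ hC,
      D.commutator_apply_eq_smul_of_eigenvectors A (hA k) (hD (σ k)) (hD k)]
  · rw [weightedComp_single_of_notMem_range hC hi, hA0 i hi, map_zero, hD, map_smul, hA0 i hi,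
      smul_zero, sub_zero]

end lp

theorem bddAbove_range_two_mul_add_one_mul_pow {q : ℝ} (hq0 : 0 ≤ q) (hq1 : q < 1) :
    BddAbove (Set.range fun i : ℕ => (2 * (i : ℝ) + 1) * q ^ i) := by
  have h := ((tendsto_self_mul_const_pow_of_lt_one hq0 hq1).const_mul 2).add
    (tendsto_pow_atTop_nhds_zero_of_lt_one hq0 hq1)
  refine (h.congr fun i => ?_).bddAbove_range
  ring

theorem abs_dNZ_sub_dNZ_add_one_left (i : ℕ) (j : ℤ) : |dNZ i j - dNZ (i + 1) j| = 1 := by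
  unfold dNZ signZ
  split_ifs <;> push_cast <;> ring_nf <;> norm_num

theorem abs_dNZ_sub_dNZ_add_one_right (i : ℕ) (j : ℤ) :
    |dNZ i j - dNZ i (j + 1)| ≤ 2 * i + 1 := by
  have hi : (0 : ℝ) ≤ i := i.cast_nonneg
  rw [abs_le]
  unfold dNZ signZ
  split_ifs <;> push_cast <;> constructor <;> linarith

/-- For the bounded operators `α, β` of the `SU_q(2)` representation on `ℓ²(ℕ × ℤ)` and
(any linear extension of) the diagonal Dirac operator `D ε_{i,j} = (i·sign(j)+j) ε_{i,j}`,
the commutators `Dα − αD`, `Dβ − βD`, defined on finitely supported vectors, extend to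
bounded operators, with `‖[D,α]‖ ≤ 1` and `‖[D,β]‖ ≤ sup_i (2i+1)q^i < ∞`. -/
theorem suq2_CP2_bounded_commutators (q : ℝ) (hq0 : 0 < q) (hq1 : q < 1)
    (α β : HNZ →L[ℂ] HNZ) (D : HNZ →ₗ[ℂ] HNZ)
    (hα0 : ∀ j : ℤ, α (eNZ 0 j) = 0)
    (hα : ∀ (i : ℕ) (j : ℤ),
      α (eNZ (i + 1) j) = ((Real.sqrt (1 - q ^ (2 * (i + 1))) : ℝ) : ℂ) • eNZ i j)
    (hβ : ∀ (i : ℕ) (j : ℤ), β (eNZ i j) = ((q ^ i : ℝ) : ℂ) • eNZ i (j - 1))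
    (hD : ∀ (i : ℕ) (j : ℤ), D (eNZ i j) = ((dNZ i j : ℝ) : ℂ) • eNZ i j) :
    (∃ Cα : HNZ →L[ℂ] HNZ, ‖Cα‖ ≤ 1 ∧
      ∀ (i : ℕ) (j : ℤ), Cα (eNZ i j) = D (α (eNZ i j)) - α (D (eNZ i j))) ∧
    BddAbove (Set.range fun i : ℕ => (2 * (i : ℝ) + 1) * q ^ i) ∧
    (∃ Cβ : HNZ →L[ℂ] HNZ, ‖Cβ‖ ≤ (⨆ i : ℕ, (2 * (i : ℝ) + 1) * q ^ i) ∧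
      ∀ (i : ℕ) (j : ℤ), Cβ (eNZ i j) = D (β (eNZ i j)) - β (D (eNZ i j))) := by
  have hp : 0 < (2 : ℝ≥0∞).toReal := by norm_num
  have hbdd := bddAbove_range_two_mul_add_one_mul_pow hq0.le hq1
  have hsup (i : ℕ) := le_ciSup hbdd i
  refine ⟨?_, hbdd, ?_⟩
  · have hσ : Injective fun k : ℕ × ℤ => (k.1 + 1, k.2) :=
      Prod.map_injective.2 ⟨add_left_injective 1, injective_id⟩
    have hα0' : ∀ k ∉ Set.range fun k : ℕ × ℤ => (k.1 + 1, k.2), α (lp.single 2 k 1) = 0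
      | (0, j), _ => hα0 j
      | (i + 1, j), hk => absurd ⟨(i, j), rfl⟩ hk
    obtain ⟨C, hC, hCe⟩ := lp.exists_commutator_diagonal_weightedShift hp hσ α D
      (fun k => hα k.1 k.2) hα0' (fun k => hD k.1 k.2) zero_le_one fun k => by
        simp only [← Complex.ofReal_sub, ← Complex.ofReal_mul, Complex.norm_real, Real.norm_eq_abs,
          abs_mul, abs_dNZ_sub_dNZ_add_one_left, one_mul, abs_of_nonneg (Real.sqrt_nonneg _)]
        exact Real.sqrt_le_one.mpr (sub_le_self _ (by positivity))
    exact ⟨C, hC, fun i j => hCe (i, j)⟩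
  · have hσ : Injective fun k : ℕ × ℤ => (k.1, k.2 + 1) :=
      Prod.map_injective.2 ⟨injective_id, add_left_injective 1⟩
    have hβ' (k : ℕ × ℤ) : β (eNZ k.1 (k.2 + 1)) = ((q ^ k.1 : ℝ) : ℂ) • eNZ k.1 k.2 := by
      simpa only [add_sub_cancel_right] using hβ k.1 (k.2 + 1)
    obtain ⟨C, hC, hCe⟩ := lp.exists_commutator_diagonal_weightedShift hp hσ β D hβ'
      (fun k hk => absurd ⟨(k.1, k.2 - 1), by simp⟩ hk) (fun k => hD k.1 k.2)
      (le_trans (by norm_num) (hsup 0)) fun k => by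
        simp only [← Complex.ofReal_sub, ← Complex.ofReal_mul, Complex.norm_real,
          Real.norm_eq_abs, abs_mul, abs_pow, abs_of_pos hq0]
        exact (mul_le_mul_of_nonneg_right (abs_dNZ_sub_dNZ_add_one_right _ _)
          (by positivity)).trans (hsup k.1)
    exact ⟨C, hC, fun i j => hCe (i, j)⟩

end
end

section
/- For every real s > 2, the sum over all (i, j) ∈ ℕ × ℤ of (1 + (i·sign(j) + j)²)^{−s/2} is finite, where sign(j) := 1 for j ≥ 0 and sign(j) := −1 for j < 0. (Hence the operator D ε_{i,j} = (i·sign(j) + j) ε_{i,j} on ℓ²(ℕ × ℤ) is 2-summable: (1 + D²)^{−s/2} is trace class for every s > 2.) -/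
lemma abs_mul_signZ_add {x : ℝ} (hx : 0 ≤ x) (j : ℤ) :
    |x * signZ j + j| = x + |(j : ℝ)| := by
  rcases le_or_gt 0 j with hj | hj
  · have hj' : (0 : ℝ) ≤ j := Int.cast_nonneg_iff.mpr hj
    simp only [signZ, if_pos hj, mul_one, abs_of_nonneg hj', abs_of_nonneg (add_nonneg hx hj')]
  · have hj' : (j : ℝ) < 0 := Int.cast_lt_zero.mpr hj
    simp only [signZ, if_neg hj.not_ge, abs_of_neg hj']
    rw [abs_of_nonpos (by linarith)]
    ring

lemma one_add_sq_mul_one_add_sq_le {a b : ℝ} (ha : 0 ≤ a) (hb : 0 ≤ b) :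
    (1 + a ^ 2) * (1 + b ^ 2) ≤ (1 + (a + b) ^ 2) ^ 2 := by
  nlinarith [mul_nonneg ha hb, mul_nonneg (mul_nonneg ha hb) (mul_nonneg ha hb),
    mul_nonneg (mul_nonneg ha hb) (sq_nonneg (a + b))]

lemma one_add_add_sq_rpow_neg_le {a b r : ℝ} (ha : 0 ≤ a) (hb : 0 ≤ b) (hr : 0 ≤ r) :
    (1 + (a + b) ^ 2) ^ (-r) ≤ (1 + a ^ 2) ^ (-(r / 2)) * (1 + b ^ 2) ^ (-(r / 2)) :=
  calc (1 + (a + b) ^ 2) ^ (-r)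
      = ((1 + (a + b) ^ 2) ^ 2) ^ (-(r / 2)) := by
        rw [← Real.rpow_natCast_mul (by positivity)]
        ring_nf
    _ ≤ ((1 + a ^ 2) * (1 + b ^ 2)) ^ (-(r / 2)) :=
        Real.rpow_le_rpow_of_nonpos (by positivity) (one_add_sq_mul_one_add_sq_le ha hb)
          (by linarith)
    _ = (1 + a ^ 2) ^ (-(r / 2)) * (1 + b ^ 2) ^ (-(r / 2)) :=
        Real.mul_rpow (by positivity) (by positivity)

lemma summable_one_add_sq_rpow_neg {r : ℝ} (hr : 1 / 2 < r) :
    Summable fun n : ℤ => (1 + (n : ℝ) ^ 2) ^ (-r) := by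
  refine (Real.summable_abs_int_rpow (b := 2 * r) (by linarith)).of_norm_bounded_eventually ?_
  filter_upwards [Filter.eventually_cofinite_ne 0] with n hn
  have hn2 : (0 : ℝ) < (n : ℝ) ^ 2 := by
    have : (n : ℝ) ≠ 0 := Int.cast_ne_zero.mpr hn
    positivity
  calc ‖(1 + (n : ℝ) ^ 2) ^ (-r)‖
      = (1 + (n : ℝ) ^ 2) ^ (-r) := Real.norm_of_nonneg (by positivity)
    _ ≤ ((n : ℝ) ^ 2) ^ (-r) := Real.rpow_le_rpow_of_nonpos hn2 (by linarith) (by linarith)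
    _ = |(n : ℝ)| ^ (-(2 * r)) := by
        rw [← sq_abs, ← Real.rpow_natCast_mul (abs_nonneg _)]
        ring_nf

/-- For every `s > 2`, `∑_{(i,j) ∈ ℕ × ℤ} (1 + (i·sign(j) + j)²)^{−s/2} < ∞`:
the Dirac operator `D ε_{i,j} = (i·sign(j)+j) ε_{i,j}` on `ℓ²(ℕ × ℤ)` is 2-summable. -/
theorem CP2_dirac_two_summable (s : ℝ) (hs : 2 < s) :
    Summable (fun p : ℕ × ℤ =>
      (1 + ((p.1 : ℝ) * signZ p.2 + (p.2 : ℝ)) ^ 2) ^ (-s / 2)) := by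
  set g : ℤ → ℝ := fun n => (1 + (n : ℝ) ^ 2) ^ (-(s / 2 / 2))
  have hg : Summable g := summable_one_add_sq_rpow_neg (by linarith)
  have hprod : Summable fun p : ℕ × ℤ => g p.1 * g p.2 :=
    (hg.comp_injective Nat.cast_injective).mul_of_nonneg hg
      (fun _ => Real.rpow_nonneg (by positivity) _) (fun _ => Real.rpow_nonneg (by positivity) _)
  refine hprod.of_nonneg_of_le (fun _ => by positivity) fun ⟨i, j⟩ => ?_
  have hX : ((i : ℝ) * signZ j + j) ^ 2 = ((i : ℝ) + |(j : ℝ)|) ^ 2 := by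
    rw [← sq_abs, abs_mul_signZ_add (Nat.cast_nonneg i)]
  have key := one_add_add_sq_rpow_neg_le (Nat.cast_nonneg i) (abs_nonneg (j : ℝ))
    (r := s / 2) (by linarith)
  simpa only [hX, neg_div, sq_abs, g, Int.cast_natCast] using key
end
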